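/- arXiv:1902.00488 — 4 statements merged into one kernel-verified Lean document; each statement's English description precedes it below -/
import Mathlib

section
/- Let G be a directed graph on the boundary vertices of a block such that the edge relation is transitively closed along undirected crossings in the following sense coming from grid reachability: if (u₁, v₁) and (u₂, v₂) are edges of G that cross each other as chords of the boundary cycle, then (u₁, v₂) and (u₂, v₁) are also edges of G. Prove that this 'crossing-closure' property holds for the reachability relation of any planar graph drawn inside a disk with the boundary vertices on the disk boundary: if there is a path from u₁ to v₁ and a path from u₂ to v₂, and the chords {u₁,v₁} and {u₂,v₂} interleave on the boundary circle, then there are paths from u₁ to v₂ and from u₂ to v₁. -/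
/-!
Suppose the two walks share no vertex. Since arcs meet only at common endpoints, their
drawings are then disjoint paths `f` and `g` in the closed unit disk joining the interleaved
boundary points `A, C` and `B, D`. The map `(s, t) ↦ f s - g t` sends the simply connected
square into `ℂ \ {0}`, so it has a continuous logarithm `L`. On each side of the square one of
the two paths rests at a boundary point `u`, so the values stay in the open half-plane facing
`u` (or `-u`), and the change of `im L` along that side is an inscribed angle of the four
points. Around the boundary of the square these changes add up to `2π` rather than `0`.
-/

/-- The point on the unit circle corresponding to the `k`-th of `N` boundary vertices
(in counter-clockwise order). -/
noncomputable def circPt (N k : ℕ) : ℂ :=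
  Complex.exp (2 * Real.pi * Complex.I * k / N)

open Complex Relation
open scoped Real

theorem re_one_sub_pos_of_norm_le_one {z : ℂ} (hz : ‖z‖ ≤ 1) (hz1 : z ≠ 1) : 0 < (1 - z).re := by
  have hsq : normSq z ≤ 1 := by
    rw [← Complex.sq_norm]; nlinarith [norm_nonneg z]
  have hne : 0 < normSq (1 - z) := normSq_pos.mpr (sub_ne_zero.mpr hz1.symm)
  simp only [normSq_apply, sub_re, sub_im, one_re, one_im] at hsq hne ⊢
  nlinarith

theorem re_sub_div_pos_of_norm_le_one {u w : ℂ} (hu : ‖u‖ = 1) (hw : ‖w‖ ≤ 1) (hwu : w ≠ u) :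
    0 < ((u - w) / u).re := by
  have hu0 : u ≠ 0 := norm_ne_zero_iff.mp (by rw [hu]; exact one_ne_zero)
  rw [sub_div, div_self hu0]
  exact re_one_sub_pos_of_norm_le_one (by rwa [norm_div, hu, div_one])
    fun h => hwu ((div_eq_one_iff_eq hu0).mp h)

theorem arg_div_eq_sub_arg_div {w z c : ℂ} (hw : 0 < (w / c).re) (hz : 0 < (z / c).re) :
    arg (w / z) = arg (w / c) - arg (z / c) := by
  have hc : c ≠ 0 := by rintro rfl; simp at hz
  have hz0 : z ≠ 0 := by rintro rfl; simp at hz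
  have hw0 : w ≠ 0 := by rintro rfl; simp at hw
  have hwz : w / z = (w / c) / (z / c) := by field_simp
  have hw' := abs_lt.mp (abs_arg_lt_pi_div_two_iff.mpr (Or.inl hw))
  have hz' := abs_lt.mp (abs_arg_lt_pi_div_two_iff.mpr (Or.inl hz))
  rw [hwz, ← arg_coe_angle_toReal_eq_arg, arg_div_coe_angle (div_ne_zero hw0 hc)
    (div_ne_zero hz0 hc), ← Real.Angle.coe_sub, Real.Angle.toReal_coe_eq_self_iff_mem_Ioc]
  constructor <;> linarith

theorem exp_mul_I_sub_exp_mul_I (x y : ℝ) :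
    exp (x * I) - exp (y * I) = 2 * I * Real.sin ((x - y) / 2) * exp (((x + y) / 2 : ℝ) * I) := by
  have hx : exp (x * I) = exp (((x + y) / 2 : ℝ) * I) * exp (((x - y) / 2 : ℝ) * I) := by
    rw [← exp_add]; congr 1; push_cast; ring
  have hy : exp (y * I) = exp (((x + y) / 2 : ℝ) * I) * exp (-(((x - y) / 2 : ℝ) * I)) := by
    rw [← exp_add]; congr 1; push_cast; ring
  rw [hx, hy, ofReal_sin, sin]
  ring_nf
  rw [I_sq]
  ring

theorem exp_mul_I_sub_div_exp_mul_I_sub {a b c : ℝ} (hab : Real.sin ((a - b) / 2) ≠ 0) :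
    (exp (c * I) - exp (b * I)) / (exp (a * I) - exp (b * I)) =
      (Real.sin ((c - b) / 2) / Real.sin ((a - b) / 2) : ℝ) * exp (((c - a) / 2 : ℝ) * I) := by
  have hexp : exp (((c - a) / 2 : ℝ) * I) =
      exp (((c + b) / 2 : ℝ) * I) / exp (((a + b) / 2 : ℝ) * I) := by
    rw [← exp_sub]; congr 1; push_cast; ring
  rw [exp_mul_I_sub_exp_mul_I, exp_mul_I_sub_exp_mul_I, hexp]
  have hab' : (Real.sin ((a - b) / 2) : ℂ) ≠ 0 := by exact_mod_cast hab
  rw [ofReal_div (Real.sin _) (Real.sin _)]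
  generalize (Real.sin ((a - b) / 2) : ℂ) = sa at hab' ⊢
  have := exp_ne_zero (((a + b) / 2 : ℝ) * I)
  field_simp

theorem arg_ofReal_mul_exp_mul_I {r θ : ℝ} (hr : 0 < r) (hθ : θ ∈ Set.Ioc (-π) π) :
    arg (r * exp (θ * I)) = θ := by
  rw [arg_real_mul _ hr, exp_mul_I]
  exact arg_cos_add_sin_mul_I hθ

-- Inscribed angle theorem: the chord from `exp (a * I)` to `exp (c * I)` is seen from
-- `exp (b * I)` under the angle `(c - a) / 2`, or `(c - a) / 2 - π`.
theorem arg_exp_mul_I_sub_div_of_pos {a b c : ℝ}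
    (h : 0 < Real.sin ((c - b) / 2) / Real.sin ((a - b) / 2)) (hca : (c - a) / 2 ∈ Set.Ioc (-π) π) :
    arg ((exp (c * I) - exp (b * I)) / (exp (a * I) - exp (b * I))) = (c - a) / 2 := by
  have hab : Real.sin ((a - b) / 2) ≠ 0 := by rintro h0; simp [h0] at h
  rw [exp_mul_I_sub_div_exp_mul_I_sub hab, arg_ofReal_mul_exp_mul_I h hca]

theorem arg_exp_mul_I_sub_div_of_neg {a b c : ℝ}
    (h : Real.sin ((c - b) / 2) / Real.sin ((a - b) / 2) < 0)
    (hca : (c - a) / 2 - π ∈ Set.Ioc (-π) π) :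
    arg ((exp (c * I) - exp (b * I)) / (exp (a * I) - exp (b * I))) = (c - a) / 2 - π := by
  have hab : Real.sin ((a - b) / 2) ≠ 0 := by rintro h0; simp [h0] at h
  have hflip : exp (((c - a) / 2 : ℝ) * I) = -exp (((c - a) / 2 - π : ℝ) * I) := by
    rw [ofReal_sub, sub_mul, exp_sub, exp_pi_mul_I]; ring
  rw [exp_mul_I_sub_div_exp_mul_I_sub hab, hflip, mul_neg, ← neg_mul, ← ofReal_neg,
    arg_ofReal_mul_exp_mul_I (neg_pos.2 h) hca]

theorem arg_div_add_arg_div_of_interleaved {α β γ δ : ℝ} (hαβ : α < β) (hβγ : β < γ)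
    (hγδ : γ < δ) (hδα : δ < α + 2 * π) :
    arg ((exp (γ * I) - exp (β * I)) / (exp (α * I) - exp (β * I))) +
        arg ((exp (γ * I) - exp (δ * I)) / (exp (γ * I) - exp (β * I))) =
      arg ((exp (α * I) - exp (δ * I)) / (exp (α * I) - exp (β * I))) +
        arg ((exp (γ * I) - exp (δ * I)) / (exp (α * I) - exp (δ * I))) - 2 * π := by
  have sin_pos : ∀ x, 0 < x → x < 2 * π → 0 < Real.sin (x / 2) := fun x h0 h1 =>
    Real.sin_pos_of_pos_of_lt_pi (by linarith) (by linarith)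
  have sin_neg : ∀ x, x < 0 → -(2 * π) < x → Real.sin (x / 2) < 0 := fun x h0 h1 =>
    Real.sin_neg_of_neg_of_neg_pi_lt (by linarith) (by linarith)
  have bottom : arg ((exp (γ * I) - exp (β * I)) / (exp (α * I) - exp (β * I))) =
      (γ - α) / 2 - π :=
    arg_exp_mul_I_sub_div_of_neg (div_neg_of_pos_of_neg (sin_pos _ (by linarith) (by linarith))
      (sin_neg _ (by linarith) (by linarith))) ⟨by linarith, by linarith⟩
  have right : arg ((exp (γ * I) - exp (δ * I)) / (exp (γ * I) - exp (β * I))) =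
      (δ - β) / 2 - π := by
    rw [← neg_div_neg_eq, neg_sub, neg_sub]
    exact arg_exp_mul_I_sub_div_of_neg (div_neg_of_pos_of_neg
      (sin_pos _ (by linarith) (by linarith)) (sin_neg _ (by linarith) (by linarith)))
      ⟨by linarith, by linarith⟩
  have left : arg ((exp (α * I) - exp (δ * I)) / (exp (α * I) - exp (β * I))) =
      (δ - β) / 2 := by
    rw [← neg_div_neg_eq, neg_sub, neg_sub]
    exact arg_exp_mul_I_sub_div_of_pos (div_pos (sin_pos _ (by linarith) (by linarith))
      (sin_pos _ (by linarith) (by linarith))) ⟨by linarith, by linarith⟩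
  have top : arg ((exp (γ * I) - exp (δ * I)) / (exp (α * I) - exp (δ * I))) = (γ - α) / 2 :=
    arg_exp_mul_I_sub_div_of_pos (div_pos_of_neg_of_neg (sin_neg _ (by linarith) (by linarith))
      (sin_neg _ (by linarith) (by linarith))) ⟨by linarith, by linarith⟩
  rw [bottom, right, left, top]
  ring

-- By uniqueness of lifts through `exp`, `F` agrees up to a constant with `log (φ · / c)`,
-- which is continuous because `φ / c` stays in the right half-plane.
theorem im_sub_im_eq_arg_div_of_exp_eq {X : Type*} [TopologicalSpace X] [PreconnectedSpace X]
    {F φ : X → ℂ} (hF : Continuous F) (hexp : ∀ x, exp (F x) = φ x) {c : ℂ}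
    (hc : ∀ x, 0 < (φ x / c).re) (x₀ x₁ : X) :
    (F x₁).im - (F x₀).im = arg (φ x₁ / φ x₀) := by
  have hφ : Continuous φ := by
    rw [show φ = fun x => exp (F x) from funext fun x => (hexp x).symm]; fun_prop
  have hslit : ∀ x, φ x / c ∈ slitPlane := fun x => Or.inl (hc x)
  set G : X → ℂ := fun x => log (φ x / c) + (F x₀ - log (φ x₀ / c))
  have hG : Continuous G := ((hφ.div_const c).clog hslit).add continuous_const
  have hGexp : ∀ x, exp (G x) = φ x := by
    intro x
    have hc0 : c ≠ 0 := by rintro rfl; simpa using hc x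
    have h0 : φ x₀ ≠ 0 := by rw [← hexp]; exact exp_ne_zero _
    simp only [G, exp_add, exp_sub, exp_log (slitPlane_ne_zero (hslit _)), hexp]
    field_simp
  have hFG : F = G := isCoveringMap_exp.eq_of_comp_eq hF hG
    (funext fun x => Subtype.ext ((hexp x).trans (hGexp x).symm)) x₀ (by simp [G])
  rw [hFG]
  simp only [G, add_im, sub_im, log_im]
  rw [arg_div_eq_sub_arg_div (hc x₁) (hc x₀)]
  ring

instance : ContractibleSpace unitInterval :=
  (convex_Icc (0 : ℝ) 1).contractibleSpace (Set.nonempty_Icc.2 zero_le_one)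

instance : LocallyPathConnectedSpace unitInterval :=
  (convex_Icc (0 : ℝ) 1).locallyPathConnectedSpace

theorem exists_continuousMap_exp_eq {X : Type*} [TopologicalSpace X] [SimplyConnectedSpace X]
    [LocallyPathConnectedSpace X] (H : C(X, ℂ)) (hH : ∀ x, H x ≠ 0) :
    ∃ L : C(X, ℂ), ∀ x, exp (L x) = H x := by
  obtain ⟨x₀⟩ := (inferInstance : Nonempty X)
  obtain ⟨L, ⟨-, hL⟩, -⟩ := isCoveringMapOn_exp.existsUnique_continuousMap_lifts H
    (exp_log (hH x₀)) hH
  exact ⟨L, fun x => congrFun hL x⟩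

theorem Path.exists_apply_eq_apply_of_interleaved {α β γ δ : ℝ} (hαβ : α < β) (hβγ : β < γ)
    (hγδ : γ < δ) (hδα : δ < α + 2 * π) (f : Path (exp (α * I)) (exp (γ * I)))
    (g : Path (exp (β * I)) (exp (δ * I))) (hf : ∀ t, ‖f t‖ ≤ 1) (hg : ∀ t, ‖g t‖ ≤ 1) :
    ∃ s t, f s = g t := by
  by_contra! hfg
  let H : C(unitInterval × unitInterval, ℂ) := ⟨fun x => f x.1 - g x.2, by fun_prop⟩
  obtain ⟨L, hL⟩ := exists_continuousMap_exp_eq H (fun x => sub_ne_zero.2 (hfg _ _))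
  have hplane : ∀ {θ : ℝ} {w : ℂ}, ‖w‖ ≤ 1 → w ≠ exp (θ * I) →
      0 < ((exp (θ * I) - w) / exp (θ * I)).re ∧ 0 < ((w - exp (θ * I)) / -exp (θ * I)).re := by
    intro θ w hw hne
    have := re_sub_div_pos_of_norm_le_one (norm_exp_ofReal_mul_I θ) hw hne
    rw [div_neg, ← neg_div, neg_sub]
    exact ⟨this, this⟩
  have bottom := im_sub_im_eq_arg_div_of_exp_eq (F := fun s => L (s, 0)) (φ := fun s => H (s, 0))
    (by fun_prop) (fun s => hL _) (c := -exp (β * I))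
    (fun s => by simpa [H] using (hplane (hf s) (by simpa using hfg s 0)).2) 0 1
  have right := im_sub_im_eq_arg_div_of_exp_eq (F := fun t => L (1, t)) (φ := fun t => H (1, t))
    (by fun_prop) (fun t => hL _) (c := exp (γ * I))
    (fun t => by simpa [H] using (hplane (hg t) (by simpa using (hfg 1 t).symm)).1) 0 1
  have top := im_sub_im_eq_arg_div_of_exp_eq (F := fun s => L (s, 1)) (φ := fun s => H (s, 1))
    (by fun_prop) (fun s => hL _) (c := -exp (δ * I))
    (fun s => by simpa [H] using (hplane (hf s) (by simpa using hfg s 1)).2) 0 1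
  have left := im_sub_im_eq_arg_div_of_exp_eq (F := fun t => L (0, t)) (φ := fun t => H (0, t))
    (by fun_prop) (fun t => hL _) (c := exp (α * I))
    (fun t => by simpa [H] using (hplane (hg t) (by simpa using (hfg 0 t).symm)).1) 0 1
  simp only [H, ContinuousMap.coe_mk, Path.source, Path.target] at bottom right top left
  have := arg_div_add_arg_div_of_interleaved hαβ hβγ hγδ hδα
  linarith [Real.pi_pos]

theorem Path.exists_apply_eq_apply_of_min_lt {a b c d : ℝ} (h₁ : min a b < min c d)
    (h₂ : min c d < max a b) (h₃ : max a b < max c d) (h₄ : max c d < min a b + 2 * π)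
    (f : Path (exp (a * I)) (exp (b * I))) (g : Path (exp (c * I)) (exp (d * I)))
    (hf : ∀ t, ‖f t‖ ≤ 1) (hg : ∀ t, ‖g t‖ ≤ 1) : ∃ s t, f s = g t := by
  wlog hab : a ≤ b generalizing a b
  · obtain ⟨s, t, h⟩ := this (by rwa [min_comm b a]) (by rwa [max_comm b a])
      (by rwa [max_comm b a]) (by rwa [min_comm b a]) f.symm (fun t => hf _) (le_of_not_ge hab)
    exact ⟨_, t, h⟩
  wlog hcd : c ≤ d generalizing c d
  · obtain ⟨s, t, h⟩ := this g.symm (fun t => hg _) (by rwa [min_comm d c])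
      (by rwa [min_comm d c]) (by rwa [max_comm d c]) (by rwa [max_comm d c]) (le_of_not_ge hcd)
    exact ⟨s, _, h⟩
  rw [min_eq_left hab, max_eq_right hab, min_eq_left hcd, max_eq_right hcd] at *
  exact exists_apply_eq_apply_of_interleaved h₁ h₂ h₃ h₄ f g hf hg

theorem circPt_eq_exp (N k : ℕ) : circPt N k = exp ((2 * π * k / N : ℝ) * I) := by
  rw [circPt]; push_cast; ring_nf

theorem Path.exists_apply_eq_apply_of_circPt {N : ℕ} {p q r s : Fin N}
    (hinter :
      (min p.val q.val < min r.val s.val ∧ min r.val s.val < max p.val q.val ∧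
        max p.val q.val < max r.val s.val) ∨
      (min r.val s.val < min p.val q.val ∧ min p.val q.val < max r.val s.val ∧
        max r.val s.val < max p.val q.val))
    (f : Path (circPt N p) (circPt N q)) (g : Path (circPt N r) (circPt N s))
    (hf : ∀ t, ‖f t‖ ≤ 1) (hg : ∀ t, ‖g t‖ ≤ 1) : ∃ x y, f x = g y := by
  have hN : (0 : ℝ) < N := by exact_mod_cast p.pos
  set θ : ℕ → ℝ := fun k => 2 * π * k / N
  have hθ : StrictMono θ := fun i j hij => by
    simp only [θ]; gcongr
  have hθ0 : ∀ k, 0 ≤ θ k := fun k => by positivity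
  have hθ2π : ∀ k : Fin N, θ k < 2 * π := fun k => by
    simp only [θ]; rw [div_lt_iff₀ hN]; gcongr; exact_mod_cast k.isLt
  have key : ∀ {a b c d : Fin N}, min a.val b.val < min c.val d.val →
      min c.val d.val < max a.val b.val → max a.val b.val < max c.val d.val →
      ∀ (f : Path (circPt N a) (circPt N b)) (g : Path (circPt N c) (circPt N d)),
      (∀ t, ‖f t‖ ≤ 1) → (∀ t, ‖g t‖ ≤ 1) → ∃ x y, f x = g y := by
    intro a b c d h₁ h₂ h₃ f g hf hg
    rw [← hθ.lt_iff_lt, hθ.monotone.map_min, hθ.monotone.map_min] at h₁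
    rw [← hθ.lt_iff_lt, hθ.monotone.map_min, hθ.monotone.map_max] at h₂
    rw [← hθ.lt_iff_lt, hθ.monotone.map_max, hθ.monotone.map_max] at h₃
    have h₄ : max (θ c) (θ d) < min (θ a) (θ b) + 2 * π := by
      have := hθ0 (min a b)
      rw [hθ.monotone.map_min] at this
      linarith [max_lt (hθ2π c) (hθ2π d)]
    exact Path.exists_apply_eq_apply_of_min_lt h₁ h₂ h₃ h₄
      (f.cast (circPt_eq_exp _ _).symm (circPt_eq_exp _ _).symm)
      (g.cast (circPt_eq_exp _ _).symm (circPt_eq_exp _ _).symm) hf hg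
  rcases hinter with ⟨h₁, h₂, h₃⟩ | ⟨h₁, h₂, h₃⟩
  · exact key h₁ h₂ h₃ f g hf hg
  · obtain ⟨y, x, h⟩ := key h₁ h₂ h₃ g f hg hf
    exact ⟨x, y, h.symm⟩

section Drawing

variable {V : Type*} (E : V → V → Prop) (pos : V → ℂ) (arc : ∀ u v : V, E u v → Set ℂ)

def drawingBetween (x y : V) : Set ℂ :=
  {z | ∃ w, z = pos w ∧ ReflTransGen E x w ∧ ReflTransGen E w y} ∪
    {z | ∃ u v, ∃ h : E u v, ReflTransGen E x u ∧ ReflTransGen E v y ∧ z ∈ arc u v h}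

variable {E pos arc}

theorem drawingBetween_mono_right {x y y' : V} (h : E y y') :
    drawingBetween E pos arc x y ⊆ drawingBetween E pos arc x y' := by
  rintro z (⟨w, rfl, hxw, hwy⟩ | ⟨u, v, huv, hxu, hvy, hz⟩)
  · exact Or.inl ⟨w, rfl, hxw, hwy.tail h⟩
  · exact Or.inr ⟨u, v, huv, hxu, hvy.tail h, hz⟩

theorem arc_subset_drawingBetween {x u v : V} (hxu : ReflTransGen E x u) (h : E u v) :
    arc u v h ⊆ drawingBetween E pos arc x v :=
  fun _ hz => Or.inr ⟨u, v, h, hxu, .refl, hz⟩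

theorem exists_path_range_subset_drawingBetween
    (harc : ∀ u v (h : E u v), ∃ γ : Path (pos u) (pos v), Set.range γ ⊆ arc u v h)
    {x y : V} (hxy : ReflTransGen E x y) :
    ∃ γ : Path (pos x) (pos y), Set.range γ ⊆ drawingBetween E pos arc x y := by
  induction hxy with
  | refl => exact ⟨.refl _, fun _ ⟨_, hz⟩ => Or.inl ⟨x, hz.symm, .refl, .refl⟩⟩
  | @tail u v hxu huv ih =>
    obtain ⟨γ, hγ⟩ := ih
    obtain ⟨δ, hδ⟩ := harc u v huv
    refine ⟨γ.trans δ, ?_⟩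
    rw [Path.trans_range]
    exact Set.union_subset (hγ.trans (drawingBetween_mono_right huv))
      (hδ.trans (arc_subset_drawingBetween hxu huv))

theorem norm_le_one_of_mem_drawingBetween (hdisk : ∀ v : V, ‖pos v‖ ≤ 1)
    (harcdisk : ∀ (u v : V) (h : E u v), ∀ z ∈ arc u v h, ‖z‖ ≤ 1) {x y : V} {z : ℂ}
    (hz : z ∈ drawingBetween E pos arc x y) : ‖z‖ ≤ 1 := by
  rcases hz with ⟨w, rfl, -⟩ | ⟨u, v, h, -, -, hz⟩
  exacts [hdisk w, harcdisk u v h z hz]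

theorem reflTransGen_of_pos_mem_drawingBetween (hposinj : Function.Injective pos)
    (hvert : ∀ (u v : V) (h : E u v) (w : V), pos w ∈ arc u v h → w = u ∨ w = v) {x y w : V}
    (hw : pos w ∈ drawingBetween E pos arc x y) : ReflTransGen E x w ∧ ReflTransGen E w y := by
  rcases hw with ⟨w', hww', hxw, hwy⟩ | ⟨u, v, h, hxu, hvy, hw⟩
  · exact hposinj hww' ▸ ⟨hxw, hwy⟩
  · rcases hvert u v h w hw with rfl | rfl
    exacts [⟨hxu, hvy.head h⟩, ⟨hxu.tail h, hvy⟩]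

theorem exists_common_vertex_of_mem_drawingBetween (hposinj : Function.Injective pos)
    (hvert : ∀ (u v : V) (h : E u v) (w : V), pos w ∈ arc u v h → w = u ∨ w = v)
    (hcross : ∀ (u v : V) (h : E u v) (u' v' : V) (h' : E u' v'), (u, v) ≠ (u', v') →
      arc u v h ∩ arc u' v' h' ⊆
        {z | ∃ w : V, z = pos w ∧ (w = u ∨ w = v) ∧ (w = u' ∨ w = v')})
    {x y x' y' : V} {z : ℂ} (hz : z ∈ drawingBetween E pos arc x y)
    (hz' : z ∈ drawingBetween E pos arc x' y') :
    ∃ w, (ReflTransGen E x w ∧ ReflTransGen E w y) ∧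
      (ReflTransGen E x' w ∧ ReflTransGen E w y') := by
  by_cases hvertex : ∃ w, z = pos w
  · obtain ⟨w, rfl⟩ := hvertex
    exact ⟨w, reflTransGen_of_pos_mem_drawingBetween hposinj hvert hz,
      reflTransGen_of_pos_mem_drawingBetween hposinj hvert hz'⟩
  simp only [not_exists] at hvertex
  rcases hz with ⟨w, rfl, -⟩ | ⟨u, v, h, hxu, hvy, hz⟩
  · exact absurd rfl (hvertex w)
  rcases hz' with ⟨w, rfl, -⟩ | ⟨u', v', h', hxu', hvy', hz'⟩
  · exact absurd rfl (hvertex w)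
  by_cases hsame : (u, v) = (u', v')
  · obtain ⟨rfl, rfl⟩ := Prod.ext_iff.mp hsame
    exact ⟨u, ⟨hxu, hvy.head h⟩, ⟨hxu', hvy'.head h'⟩⟩
  · obtain ⟨w, rfl, -⟩ := hcross u v h u' v' h' hsame ⟨hz, hz'⟩
    exact absurd rfl (hvertex w)

end Drawing

/-- crossing-closure for the reachability relation of a planar graph drawn inside
a disk.  The digraph `E` is drawn in the closed unit disk: each vertex `v` is placed at a
point `pos v` of the disk, the `N` boundary vertices `b 0, …, b (N-1)` sit on the unit
circle in counter-clockwise order, and every edge is drawn as an injective arc inside the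
disk whose interior avoids vertex points, two arcs meeting only in common endpoints.
If there are directed paths `b p ⇝ b q` and `b r ⇝ b s` and the chords `{b p, b q}` and
`{b r, b s}` interleave on the boundary circle, then there are directed paths
`b p ⇝ b s` and `b r ⇝ b q`. -/
theorem stmt_3 {V : Type*} (E : V → V → Prop) (pos : V → ℂ)
    (hposinj : Function.Injective pos)
    (hdisk : ∀ v : V, ‖pos v‖ ≤ 1)
    (arc : ∀ u v : V, E u v → Set ℂ)
    (harc : ∀ (u v : V) (h : E u v), ∃ γ : unitInterval → ℂ,
      Continuous γ ∧ Function.Injective γ ∧ γ 0 = pos u ∧ γ 1 = pos v ∧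
        Set.range γ = arc u v h)
    (harcdisk : ∀ (u v : V) (h : E u v), ∀ z ∈ arc u v h, ‖z‖ ≤ 1)
    (hvert : ∀ (u v : V) (h : E u v) (w : V), pos w ∈ arc u v h → w = u ∨ w = v)
    (hcross : ∀ (u v : V) (h : E u v) (u' v' : V) (h' : E u' v'), (u, v) ≠ (u', v') →
      arc u v h ∩ arc u' v' h' ⊆
        {z | ∃ w : V, z = pos w ∧ (w = u ∨ w = v) ∧ (w = u' ∨ w = v')})
    (N : ℕ) (b : Fin N → V)
    (hb : ∀ k : Fin N, pos (b k) = circPt N k.val)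
    (p q r s : Fin N)
    (hinter :
      (min p.val q.val < min r.val s.val ∧ min r.val s.val < max p.val q.val ∧
        max p.val q.val < max r.val s.val) ∨
      (min r.val s.val < min p.val q.val ∧ min p.val q.val < max r.val s.val ∧
        max r.val s.val < max p.val q.val))
    (h1 : Relation.ReflTransGen E (b p) (b q))
    (h2 : Relation.ReflTransGen E (b r) (b s)) :
    Relation.ReflTransGen E (b p) (b s) ∧ Relation.ReflTransGen E (b r) (b q) := by
  suffices ∃ w, (ReflTransGen E (b p) w ∧ ReflTransGen E w (b q)) ∧
      (ReflTransGen E (b r) w ∧ ReflTransGen E w (b s)) by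
    obtain ⟨w, ⟨hpw, hwq⟩, hrw, hws⟩ := this
    exact ⟨hpw.trans hws, hrw.trans hwq⟩
  have hpath : ∀ u v (h : E u v), ∃ γ : Path (pos u) (pos v), Set.range γ ⊆ arc u v h := by
    intro u v h
    obtain ⟨γ, hγc, -, hγ0, hγ1, hγr⟩ := harc u v h
    exact ⟨⟨⟨γ, hγc⟩, hγ0, hγ1⟩, hγr.subset⟩
  obtain ⟨γ₁, hγ₁⟩ := exists_path_range_subset_drawingBetween hpath h1
  obtain ⟨γ₂, hγ₂⟩ := exists_path_range_subset_drawingBetween hpath h2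
  obtain ⟨x, y, hxy⟩ := Path.exists_apply_eq_apply_of_circPt hinter
    (γ₁.cast (hb p).symm (hb q).symm) (γ₂.cast (hb r).symm (hb s).symm)
    (fun t => norm_le_one_of_mem_drawingBetween hdisk harcdisk (hγ₁ ⟨t, rfl⟩))
    (fun t => norm_le_one_of_mem_drawingBetween hdisk harcdisk (hγ₂ ⟨t, rfl⟩))
  exact exists_common_vertex_of_mem_drawingBetween hposinj hvert hcross (hγ₁ ⟨x, rfl⟩)
    (hxy ▸ hγ₂ ⟨y, rfl⟩)
end

section
/- Let e₁ = (u₁, v₁) and e₂ = (u₂, v₂) be two chords of the boundary cycle of a block both of which cross a chord f = (x, y), with e₁ closer to x than e₂ (i.e., writing all endpoints as powers of the successor from x, min of e₁'s indices is smaller than min of e₂'s indices). If the edge relation of the auxiliary graph satisfies the crossing-closure property (crossing edges imply the two swapped edges exist), then (u₁, v₂) is also an edge of the auxiliary graph. -/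
/-- Two chords with endpoint-index pairs `{a, b}` and `{c, d}` (indices counted
counter-clockwise from a fixed base vertex) cross iff their index pairs interleave. -/
def crosses (a b c d : ℕ) : Prop :=
  (min a b < min c d ∧ min c d < max a b ∧ max a b < max c d) ∨
  (min c d < min a b ∧ min a b < max c d ∧ max c d < max a b)

/-- let `f = (x, y)` be a chord of the boundary cycle of a block, with all
endpoint indices counted counter-clockwise from `x` (so `x` has index `0` and `y` has index
`p`).  Let `e₁ = (a₁, b₁)` and `e₂ = (a₂, b₂)` be chords (edges) that both cross `f`, with
`e₁` closer to `x` than `e₂` (`min(a₁,b₁) < min(a₂,b₂)`).  If the edge relation satisfies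
the crossing-closure property, then `(a₁, b₂)` is also an edge. -/
theorem stmt_4 (Edge : ℕ → ℕ → Prop)
    (hclosure : ∀ a b c d : ℕ, Edge a b → Edge c d → crosses a b c d →
      Edge a d ∧ Edge c b)
    (p a₁ b₁ a₂ b₂ : ℕ)
    (ha₁ : 0 < a₁) (hb₁ : 0 < b₁) (ha₂ : 0 < a₂) (hb₂ : 0 < b₂)
    (hd₁ : a₁ ≠ b₁) (hd₂ : a₂ ≠ b₂) (hd₃ : a₁ ≠ a₂) (hd₄ : a₁ ≠ b₂) (hd₅ : b₁ ≠ a₂)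
    (hd₆ : b₁ ≠ b₂)
    (hf : Edge 0 p) (he₁ : Edge a₁ b₁) (he₂ : Edge a₂ b₂)
    (hc₁ : min a₁ b₁ < p ∧ p < max a₁ b₁)
    (hc₂ : min a₂ b₂ < p ∧ p < max a₂ b₂)
    (hcloser : min a₁ b₁ < min a₂ b₂) :
    Edge a₁ b₂ := by
  obtain ⟨h1, h2⟩ := hc₁
  obtain ⟨h3, h4⟩ := hc₂
  have hap : Edge a₁ p := (hclosure 0 p a₁ b₁ hf he₁ (by unfold crosses; omega)).2
  rcases lt_or_gt_of_ne (show max a₁ b₁ ≠ max a₂ b₂ by omega) with h | h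
  · exact (hclosure a₁ b₁ a₂ b₂ he₁ he₂ (by unfold crosses; omega)).1
  · exact (hclosure a₁ p a₂ b₂ hap he₂ (by unfold crosses; omega)).1
end

section
/- Reachability is preserved under the auxiliary graph construction: for an m × m grid graph G and boundary vertices x, y of aux(G), there is a directed path from x to y in aux(G) if and only if there is a directed path from x to y in G. -/
/-!
Going from the auxiliary graph to the grid just concatenates the in-block paths. Conversely,
walk along a grid path keeping the invariant "the auxiliary graph reaches a boundary vertex `w`
from which the current vertex is reached inside one block". Every grid edge lies in some block;
if it leaves the current block, its tail lies in two blocks and hence on a boundary line, so the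
in-block path so far becomes one auxiliary edge and a new block is entered.
-/

open Relation

namespace GridAux

def GridAdj (m : ℕ) (u v : ℕ × ℕ) : Prop :=
  u.1 ≤ m ∧ u.2 ≤ m ∧ v.1 ≤ m ∧ v.2 ≤ m ∧
    ((u.1 = v.1 ∧ (u.2 + 1 = v.2 ∨ v.2 + 1 = u.2)) ∨
      (u.2 = v.2 ∧ (u.1 + 1 = v.1 ∨ v.1 + 1 = u.1)))

def OnBoundary (t : ℕ) (p : ℕ × ℕ) : Prop := t ∣ p.1 ∨ t ∣ p.2

def InBlock (t a b : ℕ) (p : ℕ × ℕ) : Prop :=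
  a * t ≤ p.1 ∧ p.1 ≤ (a + 1) * t ∧ b * t ≤ p.2 ∧ p.2 ≤ (b + 1) * t

def blockEdge (t : ℕ) (E : ℕ × ℕ → ℕ × ℕ → Prop) (a b : ℕ) (w z : ℕ × ℕ) : Prop :=
  E w z ∧ a * t ≤ w.1 ∧ w.1 ≤ (a + 1) * t ∧ b * t ≤ w.2 ∧ w.2 ≤ (b + 1) * t ∧
    a * t ≤ z.1 ∧ z.1 ≤ (a + 1) * t ∧ b * t ≤ z.2 ∧ z.2 ≤ (b + 1) * t

theorem blockEdge_of_inBlock {t : ℕ} {E : ℕ × ℕ → ℕ × ℕ → Prop} {a b : ℕ} {w z : ℕ × ℕ}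
    (e : E w z) (hw : InBlock t a b w) (hz : InBlock t a b z) : blockEdge t E a b w z :=
  ⟨e, hw.1, hw.2.1, hw.2.2.1, hw.2.2.2, hz⟩

def auxEdge (m t : ℕ) (E : ℕ × ℕ → ℕ × ℕ → Prop) (u v : ℕ × ℕ) : Prop :=
  OnBoundary t u ∧ OnBoundary t v ∧
    ∃ a b : ℕ, (a + 1) * t ≤ m ∧ (b + 1) * t ≤ m ∧ ReflTransGen (blockEdge t E a b) u v

theorem reflTransGen_of_reflTransGen_auxEdge {m t : ℕ} {E : ℕ × ℕ → ℕ × ℕ → Prop}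
    {x y : ℕ × ℕ} (h : ReflTransGen (auxEdge m t E) x y) : ReflTransGen E x y :=
  ReflTransGen.lift' id
    (fun _ _ ⟨_, _, _, _, _, _, hp⟩ => ReflTransGen.mono (fun _ _ e => e.1) _ _ hp) _ _ h

theorem exists_block_interval {t m i j : ℕ} (ht : 0 < t) (hdvd : t ∣ m) (hm : 0 < m)
    (hi : i ≤ m) (hj : j ≤ m) (hij : i ≤ j + 1) (hji : j ≤ i + 1) :
    ∃ a, (a + 1) * t ≤ m ∧ a * t ≤ i ∧ i ≤ (a + 1) * t ∧ a * t ≤ j ∧ j ≤ (a + 1) * t := by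
  obtain ⟨k, hk⟩ := hdvd
  rw [mul_comm] at hk
  -- the block containing `[p, p + 1]`; clamping `p` below `m` keeps that block inside `[0, m]`
  set p := min (min i j) (m - 1)
  have hp : p < k * t := by omega
  have hlo : p / t * t ≤ p := Nat.div_mul_le_self p t
  have hhi : p < p / t * t + t := Nat.lt_div_mul_add ht
  have hbound : p / t * t + t ≤ k * t := by
    rw [← add_one_mul]; exact Nat.mul_le_mul_right t ((Nat.div_lt_iff_lt_mul ht).2 hp)
  simp only [add_one_mul]
  exact ⟨p / t, by omega, by omega, by omega, by omega, by omega⟩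

theorem exists_block_of_gridAdj {m t : ℕ} (ht : 0 < t) (hdvd : t ∣ m) {u v : ℕ × ℕ}
    (huv : GridAdj m u v) :
    ∃ a b, (a + 1) * t ≤ m ∧ (b + 1) * t ≤ m ∧ InBlock t a b u ∧ InBlock t a b v := by
  obtain ⟨hu1, hu2, hv1, hv2, hadj⟩ := huv
  have hm : 0 < m := by omega
  obtain ⟨a, ha, hau, hau', hav, hav'⟩ :=
    exists_block_interval ht hdvd hm hu1 hv1 (by omega) (by omega)
  obtain ⟨b, hb, hbu, hbu', hbv, hbv'⟩ :=
    exists_block_interval ht hdvd hm hu2 hv2 (by omega) (by omega)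
  exact ⟨a, b, ha, hb, ⟨hau, hau', hbu, hbu'⟩, ⟨hav, hav', hbv, hbv'⟩⟩

theorem eq_div_of_not_dvd {t a i : ℕ} (hlo : a * t ≤ i) (hhi : i ≤ (a + 1) * t)
    (hi : ¬t ∣ i) : a = i / t := by
  have hlo' : a * t ≠ i := fun h => hi (h ▸ dvd_mul_left t a)
  have hhi' : i ≠ (a + 1) * t := fun h => hi (h ▸ dvd_mul_left t (a + 1))
  exact (Nat.div_eq_of_lt_le hlo (lt_of_le_of_ne hhi hhi')).symm

theorem InBlock.eq_of_not_onBoundary {t a b a' b' : ℕ} {p : ℕ × ℕ} (h : InBlock t a b p)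
    (h' : InBlock t a' b' p) (hp : ¬OnBoundary t p) : a = a' ∧ b = b' := by
  simp only [OnBoundary, not_or] at hp
  exact ⟨(eq_div_of_not_dvd h.1 h.2.1 hp.1).trans (eq_div_of_not_dvd h'.1 h'.2.1 hp.1).symm,
    (eq_div_of_not_dvd h.2.2.1 h.2.2.2 hp.2).trans
      (eq_div_of_not_dvd h'.2.2.1 h'.2.2.2 hp.2).symm⟩

def AuxReach (m t : ℕ) (E : ℕ × ℕ → ℕ × ℕ → Prop) (x u : ℕ × ℕ) : Prop :=
  ∃ w a b, OnBoundary t w ∧ ReflTransGen (auxEdge m t E) x w ∧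
    (a + 1) * t ≤ m ∧ (b + 1) * t ≤ m ∧ InBlock t a b u ∧ ReflTransGen (blockEdge t E a b) w u

section

variable {m t : ℕ} {E : ℕ × ℕ → ℕ × ℕ → Prop} {x u v : ℕ × ℕ}

theorem AuxReach.reflTransGen_auxEdge (h : AuxReach m t E x u) (hu : OnBoundary t u) :
    ReflTransGen (auxEdge m t E) x u :=
  let ⟨_, a, b, hw, hxw, ha, hb, _, hp⟩ := h
  hxw.tail ⟨hw, hu, a, b, ha, hb, hp⟩

theorem auxReach_of_edge (ht : 0 < t) (hdvd : t ∣ m)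
    (hE : ∀ u v, E u v → GridAdj m u v) (hxu : ReflTransGen (auxEdge m t E) x u)
    (hu : OnBoundary t u) (e : E u v) : AuxReach m t E x v :=
  let ⟨a, b, ha, hb, hau, hav⟩ := exists_block_of_gridAdj ht hdvd (hE u v e)
  ⟨u, a, b, hu, hxu, ha, hb, hav, .single (blockEdge_of_inBlock e hau hav)⟩

theorem AuxReach.tail (ht : 0 < t) (hdvd : t ∣ m)
    (hE : ∀ u v, E u v → GridAdj m u v) (h : AuxReach m t E x u) (e : E u v) :
    AuxReach m t E x v := by
  by_cases hu : OnBoundary t u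
  · exact auxReach_of_edge ht hdvd hE (h.reflTransGen_auxEdge hu) hu e
  · obtain ⟨w, a, b, hw, hxw, ha, hb, hau, hp⟩ := h
    obtain ⟨a', b', -, -, hau', hav⟩ := exists_block_of_gridAdj ht hdvd (hE u v e)
    obtain ⟨rfl, rfl⟩ := hau.eq_of_not_onBoundary hau' hu
    exact ⟨w, a, b, hw, hxw, ha, hb, hav, hp.tail (blockEdge_of_inBlock e hau hav)⟩

theorem AuxReach.trans_reflTransGen (ht : 0 < t) (hdvd : t ∣ m)
    (hE : ∀ u v, E u v → GridAdj m u v) (h : AuxReach m t E x u) (huv : ReflTransGen E u v) :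
    AuxReach m t E x v := by
  induction huv with
  | refl => exact h
  | tail _ e ih => exact ih.tail ht hdvd hE e

theorem reflTransGen_auxEdge_of_reflTransGen (ht : 0 < t) (hdvd : t ∣ m)
    (hE : ∀ u v, E u v → GridAdj m u v) (hx : OnBoundary t x) (hv : OnBoundary t v)
    (hxv : ReflTransGen E x v) : ReflTransGen (auxEdge m t E) x v := by
  rcases hxv.cases_head with rfl | ⟨c, e, hcv⟩
  · exact .refl
  · exact ((auxReach_of_edge ht hdvd hE .refl hx e).trans_reflTransGen ht hdvd hE hcv)
      |>.reflTransGen_auxEdge hv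

end

end GridAux

open GridAux in
/-- reachability is preserved under the auxiliary graph construction.
`E` is the edge relation of a directed grid graph on `{0,…,m} × {0,…,m}` (edges join
horizontally or vertically adjacent lattice points), divided into blocks of side `t`
(`t ∣ m`).  The auxiliary graph has as vertices the lattice points on block boundary
lines (a coordinate divisible by `t`), and an edge from `u` to `v` whenever `u, v` are
boundary vertices and some block of the grid contains a directed path from `u` to `v`
lying entirely inside this block.  Then for boundary vertices `x, y` there is a directed
path from `x` to `y` in the auxiliary graph iff there is one in the grid graph. -/
theorem stmt_9 (m t : ℕ) (ht : 0 < t) (hdvd : t ∣ m)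
    (E : ℕ × ℕ → ℕ × ℕ → Prop)
    (hE : ∀ u v : ℕ × ℕ, E u v → u.1 ≤ m ∧ u.2 ≤ m ∧ v.1 ≤ m ∧ v.2 ≤ m ∧
      ((u.1 = v.1 ∧ (u.2 + 1 = v.2 ∨ v.2 + 1 = u.2)) ∨
        (u.2 = v.2 ∧ (u.1 + 1 = v.1 ∨ v.1 + 1 = u.1))))
    (x y : ℕ × ℕ)
    (hx : t ∣ x.1 ∨ t ∣ x.2) (hy : t ∣ y.1 ∨ t ∣ y.2) :
    Relation.ReflTransGen
      (fun u v => (t ∣ u.1 ∨ t ∣ u.2) ∧ (t ∣ v.1 ∨ t ∣ v.2) ∧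
        ∃ a b : ℕ, (a + 1) * t ≤ m ∧ (b + 1) * t ≤ m ∧
          Relation.ReflTransGen
            (fun w z => E w z ∧
              a * t ≤ w.1 ∧ w.1 ≤ (a + 1) * t ∧ b * t ≤ w.2 ∧ w.2 ≤ (b + 1) * t ∧
              a * t ≤ z.1 ∧ z.1 ≤ (a + 1) * t ∧ b * t ≤ z.2 ∧ z.2 ≤ (b + 1) * t)
            u v)
      x y ↔ Relation.ReflTransGen E x y :=
  ⟨reflTransGen_of_reflTransGen_auxEdge,
    reflTransGen_auxEdge_of_reflTransGen (m := m) ht hdvd hE hx hy⟩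
end

section
/- Any simple directed path from x to y in H can be decomposed into subpaths P₁, ..., P_L with L ≤ |V(H)| such that each Pᵢ has all its vertices in Uᵢ ∪ V(C) for a single connected component Uᵢ of H ⊖ C, and consecutive subpaths either share their endpoint (which is then a vertex of C) or are joined by an edge of H that crosses some edge of C. -/
/-- An edge of `H ⊖ C`. -/
def sepEdge {V : Type*} (E : V → V → Prop) (cross : V → V → V → V → Prop)
    (CV : Set V) (CE : Set (V × V)) (u v : V) : Prop :=
  E u v ∧ u ∉ CV ∧ v ∉ CV ∧ ∀ f ∈ CE, ¬ cross u v f.1 f.2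

/-- Connectivity (underlying undirected) in `H ⊖ C`. -/
def sepReach {V : Type*} (E : V → V → Prop) (cross : V → V → V → V → Prop)
    (CV : Set V) (CE : Set (V × V)) : V → V → Prop :=
  Relation.ReflTransGen (fun u v => sepEdge E cross CV CE u v ∨ sepEdge E cross CV CE v u)

/-- Glue a list of subpaths together, merging a shared endpoint of consecutive subpaths. -/
def glue {α : Type*} [DecidableEq α] : List (List α) → List α
  | [] => []
  | [P] => P
  | P :: Q :: rest =>
      let g := glue (Q :: rest)
      P ++ (if P.getLast? = g.head? then g.tail else g)

/-!
Walk along the path and cut it at an edge `a → b` when `b ∈ V(C)` (the two pieces then share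
`b`) or when `a, b ∉ V(C)` and the edge crosses an edge of `C`. Every edge kept inside a piece
touches `V(C)` or is an edge of `H ⊖ C`, so each piece lies in one component of `H ⊖ C`
together with `V(C)`. Each piece contributes a vertex not in the earlier ones, so a simple path
has at most `|V(H)|` pieces.
-/

section Glue

variable {α : Type*} [DecidableEq α]
open List

lemma glue_cons_cons (P Q : List α) (r : List (List α)) :
    glue (P :: Q :: r) =
      P ++ (if P.getLast? = (glue (Q :: r)).head? then (glue (Q :: r)).tail
        else glue (Q :: r)) := rfl

lemma glue_cons_of_ne_nil (a : α) {P : List α} (hP : P ≠ []) (r : List (List α)) :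
    glue ((a :: P) :: r) = a :: glue (P :: r) := by
  obtain ⟨x, xs, rfl⟩ := exists_cons_of_ne_nil hP
  cases r with
  | nil => rfl
  | cons Q r => rw [glue_cons_cons, glue_cons_cons, getLast?_cons_cons, cons_append]

lemma head?_glue_cons {P : List α} (hP : P ≠ []) (r : List (List α)) :
    (glue (P :: r)).head? = P.head? := by
  obtain ⟨x, xs, rfl⟩ := exists_cons_of_ne_nil hP
  cases r with
  | nil => rfl
  | cons Q r => rfl

lemma glue_ne_nil {Ps : List (List α)} (h : glue Ps ≠ []) : Ps ≠ [] := by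
  rintro rfl
  exact h rfl

end Glue

section Decomposition

variable {V : Type*} (E : V → V → Prop) (cross : V → V → V → V → Prop)
  (CV : Set V) (CE : Set (V × V))

def InSepComponent (P : List V) : Prop :=
  ∃ u₀ : V, ∀ z ∈ P, z ∈ CV ∨ sepReach E cross CV CE u₀ z

def SepLinked (P Q : List V) : Prop :=
  (P.getLast? = Q.head? ∧ ∃ c, P.getLast? = some c ∧ c ∈ CV) ∨
    (∃ a b : V, P.getLast? = some a ∧ Q.head? = some b ∧ E a b ∧
      ∃ f ∈ CE, cross a b f.1 f.2)

def IsSepDecomposition (Ps : List (List V)) : Prop :=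
  (∀ P ∈ Ps, P ≠ [] ∧ P.IsChain E ∧ InSepComponent E cross CV CE P) ∧
    Ps.IsChain (SepLinked E cross CV CE)

variable {E cross CV CE}

lemma inSepComponent_singleton (a : V) : InSepComponent E cross CV CE [a] :=
  ⟨a, List.forall_mem_singleton.2 (Or.inr .refl)⟩

lemma inSepComponent_pair_of_mem {b : V} (a : V) (hb : b ∈ CV) :
    InSepComponent E cross CV CE [a, b] :=
  ⟨a, List.forall_mem_cons.2 ⟨Or.inr .refl, List.forall_mem_singleton.2 (Or.inl hb)⟩⟩

lemma InSepComponent.cons_of_mem {a : V} {P : List V} (hP : InSepComponent E cross CV CE P)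
    (ha : a ∈ CV) : InSepComponent E cross CV CE (a :: P) := by
  obtain ⟨u₀, hu₀⟩ := hP
  exact ⟨u₀, List.forall_mem_cons.2 ⟨Or.inl ha, hu₀⟩⟩

lemma InSepComponent.cons_of_sepEdge {a b : V} {P : List V}
    (hP : InSepComponent E cross CV CE P) (hbP : b ∈ P) (hab : sepEdge E cross CV CE a b) :
    InSepComponent E cross CV CE (a :: P) := by
  obtain ⟨u₀, hu₀⟩ := hP
  have hreach_b : sepReach E cross CV CE u₀ b := (hu₀ b hbP).resolve_left hab.2.2.1
  exact ⟨u₀, List.forall_mem_cons.2 ⟨Or.inr (hreach_b.tail (Or.inr hab)), hu₀⟩⟩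

lemma IsSepDecomposition.cons {P Q : List V} {Qs : List (List V)}
    (hQs : IsSepDecomposition E cross CV CE (Q :: Qs)) (hP : P ≠ []) (hE : P.IsChain E)
    (hC : InSepComponent E cross CV CE P) (hPQ : SepLinked E cross CV CE P Q) :
    IsSepDecomposition E cross CV CE (P :: Q :: Qs) :=
  ⟨List.forall_mem_cons.2 ⟨⟨hP, hE, hC⟩, hQs.1⟩, hQs.2.cons_cons hPQ⟩

lemma IsSepDecomposition.cons_to_head {a b : V} {P : List V} {Ps : List (List V)}
    (hPs : IsSepDecomposition E cross CV CE (P :: Ps)) (hhead : P.head? = some b)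
    (hab : E a b) (hC : InSepComponent E cross CV CE (a :: P)) :
    IsSepDecomposition E cross CV CE ((a :: P) :: Ps) := by
  obtain ⟨hpieces, hlinked⟩ := hPs
  obtain ⟨hP, hPE, -⟩ := hpieces P List.mem_cons_self
  obtain ⟨c, cs, rfl⟩ := List.exists_cons_of_ne_nil hP
  obtain rfl : c = b := by simpa using hhead
  refine ⟨List.forall_mem_cons.2 ⟨⟨List.cons_ne_nil _ _, hPE.cons_cons hab, hC⟩,
    List.forall_mem_of_forall_mem_cons hpieces⟩, ?_⟩
  cases Ps with
  | nil => exact List.isChain_singleton _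
  | cons Q Qs =>
    rw [List.isChain_cons_cons] at hlinked ⊢
    exact ⟨by simpa [SepLinked, List.getLast?_cons_cons] using hlinked.1, hlinked.2⟩

theorem exists_isSepDecomposition [DecidableEq V] (l : List V) (hl : l ≠ [])
    (hE : l.IsChain E) (hnodup : l.Nodup) :
    ∃ Ps, IsSepDecomposition E cross CV CE Ps ∧ glue Ps = l ∧ Ps.length ≤ l.length := by
  induction l with
  | nil => exact absurd rfl hl
  | cons a t ih =>
    rcases t with _ | ⟨b, rest⟩
    · exact ⟨[[a]], ⟨by simp [inSepComponent_singleton], List.isChain_singleton _⟩, rfl,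
        le_rfl⟩
    rw [List.isChain_cons_cons] at hE
    obtain ⟨hab, hE⟩ := hE
    obtain ⟨ha_rest, hnodup⟩ := List.nodup_cons.1 hnodup
    obtain ⟨Ps, hPs, hglue, hlen⟩ := ih (List.cons_ne_nil _ _) hE hnodup
    obtain ⟨P, Ps, rfl⟩ :=
      List.exists_cons_of_ne_nil (glue_ne_nil (hglue ▸ List.cons_ne_nil _ _))
    have hP : P ≠ [] := (hPs.1 P List.mem_cons_self).1
    have hhead : P.head? = some b := by rw [← head?_glue_cons hP Ps, hglue]; rfl
    have hlen' : (P :: Ps).length + 1 ≤ (a :: b :: rest).length := by simpa using hlen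
    have hprepend (hC : InSepComponent E cross CV CE (a :: P)) :
        ∃ Qs, IsSepDecomposition E cross CV CE Qs ∧ glue Qs = a :: b :: rest ∧
          Qs.length ≤ (a :: b :: rest).length :=
      ⟨(a :: P) :: Ps, hPs.cons_to_head hhead hab hC, by rw [glue_cons_of_ne_nil a hP, hglue],
        by simpa using hlen'.trans' (Nat.le_succ _)⟩
    by_cases hb : b ∈ CV
    · refine ⟨[a, b] :: P :: Ps, hPs.cons (List.cons_ne_nil _ _) (List.isChain_pair.2 hab)
        (inSepComponent_pair_of_mem a hb) (Or.inl ⟨by simp [hhead], b, rfl, hb⟩), ?_, hlen'⟩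
      rw [glue_cons_cons, hglue, if_pos (by simp)]
      rfl
    by_cases ha : a ∈ CV
    · exact hprepend ((hPs.1 P List.mem_cons_self).2.2.cons_of_mem ha)
    by_cases hcross : ∃ f ∈ CE, cross a b f.1 f.2
    · refine ⟨[a] :: P :: Ps, hPs.cons (List.cons_ne_nil _ _) (List.isChain_singleton _)
        (inSepComponent_singleton a) (Or.inr ⟨a, b, rfl, hhead, hab, hcross⟩), ?_, hlen'⟩
      have hab' : a ≠ b := fun h => ha_rest (h ▸ List.mem_cons_self)
      rw [glue_cons_cons, hglue, if_neg (by simpa using hab')]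
      rfl
    · exact hprepend ((hPs.1 P List.mem_cons_self).2.2.cons_of_sepEdge
        (List.mem_of_head? hhead) ⟨hab, ha, hb, fun f hf hc => hcross ⟨f, hf, hc⟩⟩)

end Decomposition

theorem stmt_12_general {V : Type*} [Fintype V] [DecidableEq V]
    (E : V → V → Prop) (cross : V → V → V → V → Prop)
    (CV : Set V) (CE : Set (V × V))
    (p : List V)
    (hne : p ≠ [])
    (hchain : List.Chain' E p) (hnodup : p.Nodup) :
    ∃ Ps : List (List V),
      Ps ≠ [] ∧ (∀ P ∈ Ps, P ≠ []) ∧ Ps.length ≤ Fintype.card V ∧ glue Ps = p ∧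
      (∀ P ∈ Ps, List.Chain' E P ∧
        ∃ u₀ : V, ∀ z ∈ P, z ∈ CV ∨ sepReach E cross CV CE u₀ z) ∧
      List.Chain'
        (fun P Q =>
          (P.getLast? = Q.head? ∧ ∃ c, P.getLast? = some c ∧ c ∈ CV) ∨
          (∃ a b : V, P.getLast? = some a ∧ Q.head? = some b ∧ E a b ∧
            ∃ f ∈ CE, cross a b f.1 f.2))
        Ps := by
  obtain ⟨Ps, ⟨hpieces, hlinked⟩, hglue, hlen⟩ :=
    exists_isSepDecomposition (cross := cross) (CV := CV) (CE := CE) p hne hchain hnodup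
  exact ⟨Ps, glue_ne_nil (hglue ▸ hne), fun P hP => (hpieces P hP).1,
    hlen.trans hnodup.length_le_card, hglue,
    fun P hP => ⟨(hpieces P hP).2.1, (hpieces P hP).2.2⟩, hlinked⟩

/-- any simple directed path `p` from `x` to `y` in `H` decomposes into
subpaths `P₁, …, P_L` with `L ≤ |V(H)|` such that each `Pᵢ` has all its vertices in
`Uᵢ ∪ V(C)` for a single connected component `Uᵢ` of `H ⊖ C`, and consecutive subpaths
either share their endpoint — which then is a vertex of `C` — or are joined by an edge
of `H` that crosses some edge of `C`. -/
theorem stmt_12 {V : Type*} [Fintype V] [DecidableEq V]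
    (E : V → V → Prop) (cross : V → V → V → V → Prop)
    (CV : Set V) (CE : Set (V × V)) (hCE : ∀ f ∈ CE, E f.1 f.2)
    (p : List V) (x y : V)
    (hne : p ≠ []) (hhead : p.head? = some x) (hlast : p.getLast? = some y)
    (hchain : List.Chain' E p) (hnodup : p.Nodup) :
    ∃ Ps : List (List V),
      Ps ≠ [] ∧ (∀ P ∈ Ps, P ≠ []) ∧ Ps.length ≤ Fintype.card V ∧ glue Ps = p ∧
      (∀ P ∈ Ps, List.Chain' E P ∧
        ∃ u₀ : V, ∀ z ∈ P, z ∈ CV ∨ sepReach E cross CV CE u₀ z) ∧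
      List.Chain'
        (fun P Q =>
          (P.getLast? = Q.head? ∧ ∃ c, P.getLast? = some c ∧ c ∈ CV) ∨
          (∃ a b : V, P.getLast? = some a ∧ Q.head? = some b ∧ E a b ∧
            ∃ f ∈ CE, cross a b f.1 f.2))
        Ps :=
  stmt_12_general E cross CV CE p hne hchain hnodup
end
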